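/- Let $H_1, H_2$ be $n\times n$ complex Hermitian matrices with $H_1$ negative semi-definite, with spectral decomposition $H_1 = Q\Lambda Q^\dagger$, $Q$ unitary, $\Lambda = \mathrm{diag}(\lambda_1,\dots,\lambda_n)$, all $\lambda_i\le 0$. Fix $\Delta t>0$ and $u_0\in\mathbb{C}^n$, $u_0\neq 0$. Define $u^0 := u_0$, $u^{m+1} := \exp(i\Delta t\, H_2)\exp(\Delta t\, H_1)\,u^m$, and $v^0(p) := e^{-|p|}u_0$, $v^{m+1} := \exp(i\Delta t\, H_2)\,\big(T_{\Delta t} v^m\big)$, where $(T_t w)(p) := Q\,\big((Q^\dagger w)_i(p-\lambda_i t)\big)_{i=1}^n$. Then for every $m\ge 0$, $$\frac{\int_0^{\infty}\|v^m(p)\|^2\,dp}{\int_{-\infty}^{\infty}\|v^m(p)\|^2\,dp} = \frac{1}{2}\Big(\frac{\|u^m\|}{\|u_0\|}\Big)^2.$$ -/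

import Mathlib

open Matrix MeasureTheory

/-- The Euclidean norm on `Fin n → ℂ`. -/
noncomputable def euclNorm {n : ℕ} (x : Fin n → ℂ) : ℝ :=
  Real.sqrt (∑ i, ‖x i‖ ^ 2)

/-!
Both steps of the splitting preserve `∫ ‖v(p)‖² dp`: the unitary step pointwise, and the transport
step because in the eigenbasis of `H₁` it only translates each component. So the denominator stays
`∫ e^{-2|p|} ‖u₀‖² dp = ‖u₀‖²`. Since all `λᵢ ≤ 0`, on `p ≥ 0` the transport step only reads
values at `p - λᵢΔt ≥ 0`, where inductively `vᵐ(p) = e^{-p} uᵐ`; there the translation multiplies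
the `i`-th eigencomponent by `e^{λᵢΔt}`, i.e. applies `exp(Δt H₁)`. Hence `vᵐ(p) = e^{-p} uᵐ` on
`p ≥ 0` for all `m`, and the numerator is `‖uᵐ‖²/2`.
-/

section MatrixExp

variable {m : Type*} [Fintype m] [DecidableEq m]

theorem exp_I_mul_smul_mem_unitaryGroup {H : Matrix m m ℂ} (hH : H.IsHermitian) (t : ℝ) :
    NormedSpace.exp ((Complex.I * (t : ℂ)) • H) ∈ unitaryGroup m ℂ := by
  set A := (Complex.I * (t : ℂ)) • H
  have hA : Aᴴ = -A := by simp [A, conjTranspose_smul, hH.eq]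
  rw [unitaryGroup, Unitary.mem_iff, star_eq_conjTranspose, ← exp_conjTranspose, hA,
    ← exp_add_of_commute _ _ (Commute.refl A).neg_left,
    ← exp_add_of_commute _ _ (Commute.refl A).neg_right]
  simp

theorem exp_smul_unitary_conj_diagonal {Q : Matrix m m ℂ} (hQ : Q ∈ unitaryGroup m ℂ)
    (l : m → ℝ) (t : ℝ) :
    NormedSpace.exp (t • (Q * diagonal (fun i => (l i : ℂ)) * Qᴴ)) =
      Q * diagonal (fun i => (Real.exp (l i * t) : ℂ)) * Qᴴ := by
  have hQinv : Q⁻¹ = Qᴴ := inv_eq_left_inv (Unitary.star_mul_self_of_mem hQ)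
  have hdiag : t • diagonal (fun i => (l i : ℂ)) = diagonal (fun i => ((l i * t : ℝ) : ℂ)) := by
    rw [← diagonal_smul]; congr 1; ext i; simp [mul_comm]
  have hexp : NormedSpace.exp (fun i => ((l i * t : ℝ) : ℂ)) =
      fun i => (Real.exp (l i * t) : ℂ) := by
    ext i; rw [Pi.exp_def, ← Complex.exp_eq_exp_ℂ, Complex.ofReal_exp]
  rw [← smul_mul_assoc, ← mul_smul_comm, hdiag, ← hQinv,
    exp_conj _ _ (Unitary.isUnit_coe (U := ⟨Q, hQ⟩)), exp_diagonal, hexp]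

end MatrixExp

section EuclNorm

variable {n : ℕ}

theorem euclNorm_sq (x : Fin n → ℂ) : euclNorm x ^ 2 = ∑ i, ‖x i‖ ^ 2 :=
  Real.sq_sqrt (Finset.sum_nonneg fun _ _ => sq_nonneg _)

theorem euclNorm_smul_sq (r : ℝ) (x : Fin n → ℂ) :
    euclNorm (r • x) ^ 2 = r ^ 2 * euclNorm x ^ 2 := by
  simp only [euclNorm_sq, Finset.mul_sum, Pi.smul_apply, norm_smul, mul_pow, Real.norm_eq_abs,
    sq_abs]

theorem sum_norm_sq_eq_re_star_dotProduct {ι : Type*} [Fintype ι] (x : ι → ℂ) :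
    ∑ i, ‖x i‖ ^ 2 = (star x ⬝ᵥ x).re := by
  simp [dotProduct, Complex.re_sum, Complex.sq_norm, Complex.normSq_apply]

theorem euclNorm_mulVec {U : Matrix (Fin n) (Fin n) ℂ} (hU : U ∈ unitaryGroup (Fin n) ℂ)
    (x : Fin n → ℂ) : euclNorm (U *ᵥ x) = euclNorm x := by
  rw [euclNorm, euclNorm, sum_norm_sq_eq_re_star_dotProduct, sum_norm_sq_eq_re_star_dotProduct,
    star_mulVec, dotProduct_mulVec, vecMul_vecMul, ← star_eq_conjTranspose,
    Unitary.star_mul_self_of_mem hU, vecMul_one]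

theorem norm_apply_sq_le_euclNorm_sq (x : Fin n → ℂ) (i : Fin n) :
    ‖x i‖ ^ 2 ≤ euclNorm x ^ 2 := by
  rw [euclNorm_sq]
  exact Finset.single_le_sum (f := fun j => ‖x j‖ ^ 2) (fun _ _ => sq_nonneg _) (Finset.mem_univ i)

end EuclNorm

section EigenShift

variable {n : ℕ}

-- The transport propagator `T_t` is `eigenShift Q (fun i => λᵢ * t)`.
def eigenShift (Q : Matrix (Fin n) (Fin n) ℂ) (s : Fin n → ℝ) (w : ℝ → Fin n → ℂ) (p : ℝ) :
    Fin n → ℂ :=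
  Q *ᵥ fun i => (Qᴴ *ᵥ w (p - s i)) i

variable {Q : Matrix (Fin n) (Fin n) ℂ} (s : Fin n → ℝ) {w : ℝ → Fin n → ℂ}

theorem Continuous.eigenShift (hw : Continuous w) : Continuous (eigenShift Q s w) := by
  unfold _root_.eigenShift; fun_prop

theorem euclNorm_eigenShift_sq (hQ : Q ∈ unitaryGroup (Fin n) ℂ) (p : ℝ) :
    euclNorm (eigenShift Q s w p) ^ 2 = ∑ i, ‖(Qᴴ *ᵥ w (p - s i)) i‖ ^ 2 := by
  rw [eigenShift, euclNorm_mulVec hQ, euclNorm_sq]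

theorem integrable_norm_mulVec_apply_sq {U : Matrix (Fin n) (Fin n) ℂ}
    (hU : U ∈ unitaryGroup (Fin n) ℂ) (hw : Continuous w)
    (hint : Integrable fun p => euclNorm (w p) ^ 2) (i : Fin n) :
    Integrable fun p => ‖(U *ᵥ w p) i‖ ^ 2 := by
  refine hint.mono (by fun_prop) (ae_of_all _ fun p => ?_)
  rw [Real.norm_of_nonneg (sq_nonneg _), Real.norm_of_nonneg (sq_nonneg _),
    ← euclNorm_mulVec hU (w p)]
  exact norm_apply_sq_le_euclNorm_sq _ i

theorem integrable_euclNorm_eigenShift_sq (hQ : Q ∈ unitaryGroup (Fin n) ℂ) (hw : Continuous w)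
    (hint : Integrable fun p => euclNorm (w p) ^ 2) :
    Integrable fun p => euclNorm (eigenShift Q s w p) ^ 2 := by
  simp only [euclNorm_eigenShift_sq s hQ]
  exact integrable_finsetSum _ fun i _ =>
    (integrable_norm_mulVec_apply_sq (Unitary.star_mem hQ) hw hint i).comp_sub_right (s i)

theorem integral_euclNorm_eigenShift_sq (hQ : Q ∈ unitaryGroup (Fin n) ℂ) (hw : Continuous w)
    (hint : Integrable fun p => euclNorm (w p) ^ 2) :
    ∫ p, euclNorm (eigenShift Q s w p) ^ 2 = ∫ p, euclNorm (w p) ^ 2 := by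
  have hQH : Qᴴ ∈ unitaryGroup (Fin n) ℂ := Unitary.star_mem hQ
  have hcomp := integrable_norm_mulVec_apply_sq hQH hw hint
  calc ∫ p, euclNorm (eigenShift Q s w p) ^ 2
      = ∑ i, ∫ p, ‖(Qᴴ *ᵥ w (p - s i)) i‖ ^ 2 := by
        simp only [euclNorm_eigenShift_sq s hQ]
        exact integral_finsetSum _ fun i _ => (hcomp i).comp_sub_right (s i)
    _ = ∑ i, ∫ p, ‖(Qᴴ *ᵥ w p) i‖ ^ 2 :=
        Finset.sum_congr rfl fun i _ =>
          integral_sub_right_eq_self (fun p => ‖(Qᴴ *ᵥ w p) i‖ ^ 2) (s i)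
    _ = ∫ p, euclNorm (w p) ^ 2 := by
        rw [← integral_finsetSum _ fun i _ => hcomp i]
        simp only [← euclNorm_sq, euclNorm_mulVec hQH]

theorem eigenShift_of_nonpos (hs : ∀ i, s i ≤ 0) {x : Fin n → ℂ}
    (hw : ∀ p, 0 ≤ p → w p = Real.exp (-p) • x) {p : ℝ} (hp : 0 ≤ p) :
    eigenShift Q s w p =
      Real.exp (-p) • ((Q * diagonal (fun i => (Real.exp (s i) : ℂ)) * Qᴴ) *ᵥ x) := by
  rw [← mulVec_mulVec, ← mulVec_mulVec, ← mulVec_smul, eigenShift]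
  congr 1
  ext i
  have hexp : Real.exp (-(p - s i)) = Real.exp (-p) * Real.exp (s i) := by
    rw [← Real.exp_add]; ring_nf
  simp only [hw _ (by linarith [hs i] : 0 ≤ p - s i), mulVec_smul, Pi.smul_apply,
    mulVec_diagonal, Complex.real_smul, hexp]
  push_cast
  ring

end EigenShift

section ExpProfile

variable {n : ℕ}

theorem integral_Ioi_exp_neg_two_mul : ∫ p in Set.Ioi (0 : ℝ), Real.exp (-2 * p) = 1 / 2 := by
  rw [integral_exp_mul_Ioi (by norm_num : (-2 : ℝ) < 0)]
  norm_num

theorem integral_exp_neg_two_mul_abs : ∫ p : ℝ, Real.exp (-2 * |p|) = 1 := by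
  rw [integral_comp_abs (f := fun p => Real.exp (-2 * p)), integral_Ioi_exp_neg_two_mul]
  norm_num

theorem euclNorm_exp_neg_smul_sq (a : ℝ) (x : Fin n → ℂ) :
    euclNorm (Real.exp (-a) • x) ^ 2 = Real.exp (-2 * a) * euclNorm x ^ 2 := by
  rw [euclNorm_smul_sq, ← Real.exp_nat_mul]
  ring_nf

theorem integral_Ioi_euclNorm_exp_neg_smul_sq (x : Fin n → ℂ) :
    ∫ p in Set.Ioi (0 : ℝ), euclNorm (Real.exp (-p) • x) ^ 2 = euclNorm x ^ 2 / 2 := by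
  simp only [euclNorm_exp_neg_smul_sq, integral_mul_const, integral_Ioi_exp_neg_two_mul]
  ring

theorem integrable_euclNorm_exp_neg_abs_smul_sq (x : Fin n → ℂ) :
    Integrable fun p : ℝ => euclNorm (Real.exp (-|p|) • x) ^ 2 := by
  simp only [euclNorm_exp_neg_smul_sq]
  have hexp : Integrable fun p : ℝ => Real.exp (-2 * |p|) :=
    .of_integral_ne_zero (by rw [integral_exp_neg_two_mul_abs]; exact one_ne_zero)
  exact hexp.mul_const _

theorem integral_euclNorm_exp_neg_abs_smul_sq (x : Fin n → ℂ) :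
    ∫ p : ℝ, euclNorm (Real.exp (-|p|) • x) ^ 2 = euclNorm x ^ 2 := by
  simp only [euclNorm_exp_neg_smul_sq, integral_mul_const, integral_exp_neg_two_mul_abs, one_mul]

end ExpProfile

section Iterates

variable {n : ℕ} {E Q : Matrix (Fin n) (Fin n) ℂ} (s : Fin n → ℝ) {v : ℕ → ℝ → Fin n → ℂ}

theorem integrable_and_integral_euclNorm_sq_iterate (hE : E ∈ unitaryGroup (Fin n) ℂ)
    (hQ : Q ∈ unitaryGroup (Fin n) ℂ) (hcont : Continuous (v 0))
    (hint : Integrable fun p => euclNorm (v 0 p) ^ 2)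
    (hv : ∀ m p, v (m + 1) p = E *ᵥ eigenShift Q s (v m) p) (m : ℕ) :
    Integrable (fun p => euclNorm (v m p) ^ 2) ∧
      ∫ p, euclNorm (v m p) ^ 2 = ∫ p, euclNorm (v 0 p) ^ 2 := by
  have hcont : ∀ m, Continuous (v m) := by
    intro m
    induction m with
    | zero => exact hcont
    | succ m ih =>
      exact (continuous_const.matrix_mulVec (ih.eigenShift s)).congr fun p => (hv m p).symm
  induction m with
  | zero => exact ⟨hint, rfl⟩
  | succ m ih =>
    simp only [hv, euclNorm_mulVec hE]
    exact ⟨integrable_euclNorm_eigenShift_sq s hQ (hcont m) ih.1,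
      (integral_euclNorm_eigenShift_sq s hQ (hcont m) ih.1).trans ih.2⟩

theorem iterate_eigenShift_eq_exp_neg_smul (hs : ∀ i, s i ≤ 0) {u : ℕ → Fin n → ℂ}
    (hv0 : ∀ p, 0 ≤ p → v 0 p = Real.exp (-p) • u 0)
    (hv : ∀ m p, v (m + 1) p = E *ᵥ eigenShift Q s (v m) p)
    (hu : ∀ m, u (m + 1) = E *ᵥ (Q * diagonal (fun i => (Real.exp (s i) : ℂ)) * Qᴴ) *ᵥ u m)
    (m : ℕ) : ∀ p, 0 ≤ p → v m p = Real.exp (-p) • u m := by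
  induction m with
  | zero => exact hv0
  | succ m ih =>
    intro p hp
    rw [hv, eigenShift_of_nonpos s hs ih hp, mulVec_smul, hu]

end Iterates

theorem stmt11_general {n : ℕ} (H1 H2 Q : Matrix (Fin n) (Fin n) ℂ) (l : Fin n → ℝ)
    (hH2 : H2.IsHermitian)
    (hQ : Q ∈ Matrix.unitaryGroup (Fin n) ℂ)
    (hspec : H1 = Q * Matrix.diagonal (fun i => (l i : ℂ)) * Qᴴ)
    (hneg : ∀ i, l i ≤ 0)
    (Δt : ℝ) (hΔt : 0 < Δt) (u0 : Fin n → ℂ)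
    (T : ℝ → (ℝ → Fin n → ℂ) → (ℝ → Fin n → ℂ))
    (hT : ∀ (t : ℝ) (w : ℝ → Fin n → ℂ) (p : ℝ),
      T t w p = Q.mulVec (fun i => Qᴴ.mulVec (w (p - l i * t)) i))
    (u : ℕ → Fin n → ℂ)
    (hu0' : u 0 = u0)
    (hu : ∀ m : ℕ, u (m + 1) =
      (NormedSpace.exp ((Complex.I * (Δt : ℂ)) • H2)).mulVec
        ((NormedSpace.exp (Δt • H1)).mulVec (u m)))
    (v : ℕ → ℝ → Fin n → ℂ)
    (hv0 : ∀ p : ℝ, v 0 p = Real.exp (-|p|) • u0)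
    (hv : ∀ (m : ℕ) (p : ℝ), v (m + 1) p =
      (NormedSpace.exp ((Complex.I * (Δt : ℂ)) • H2)).mulVec (T Δt (v m) p)) :
    ∀ m : ℕ,
      (∫ p in Set.Ioi (0 : ℝ), (euclNorm (v m p)) ^ 2) / (∫ p : ℝ, (euclNorm (v m p)) ^ 2)
        = (1 / 2) * (euclNorm (u m) / euclNorm u0) ^ 2 := by
  intro m
  have hv' : ∀ k p, v (k + 1) p = _ *ᵥ eigenShift Q (fun i => l i * Δt) (v k) p := fun k p => by
    rw [hv, hT]; rfl
  have hv0' : v 0 = fun p => Real.exp (-|p|) • u0 := funext hv0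
  obtain ⟨-, hmass⟩ := integrable_and_integral_euclNorm_sq_iterate _
    (exp_I_mul_smul_mem_unitaryGroup hH2 Δt) hQ (by rw [hv0']; fun_prop)
    (by rw [hv0']; exact integrable_euclNorm_exp_neg_abs_smul_sq u0) hv' m
  rw [hv0', integral_euclNorm_exp_neg_abs_smul_sq] at hmass
  have hhalf := iterate_eigenShift_eq_exp_neg_smul _ (u := u)
    (fun i => mul_nonpos_of_nonpos_of_nonneg (hneg i) hΔt.le)
    (fun p hp => by rw [hv0, hu0', abs_of_nonneg hp]) hv'
    (fun k => by rw [hu, hspec, exp_smul_unitary_conj_diagonal hQ]) m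
  have hnum : ∫ p in Set.Ioi 0, euclNorm (v m p) ^ 2 = euclNorm (u m) ^ 2 / 2 := by
    rw [← integral_Ioi_euclNorm_exp_neg_smul_sq]
    exact setIntegral_congr_fun measurableSet_Ioi fun p hp => by rw [hhalf p (le_of_lt hp)]
  rw [hnum, hmass, div_pow]
  ring

/-- with `H₁, H₂` Hermitian, `H₁ = Q Λ Q†` negative
semi-definite (all `λᵢ ≤ 0`) and `u₀ ≠ 0`, the exact splitting iterates
`u⁰ = u₀`, `u^{m+1} = exp(iΔt H₂) exp(Δt H₁) uᵐ` and the Schrödingerized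
splitting iterates `v⁰(p) = e^{-|p|}u₀`, `v^{m+1} = exp(iΔt H₂)(T_{Δt} vᵐ)`
satisfy, for every `m ≥ 0`,
`(∫_{p≥0} ‖vᵐ(p)‖² dp)/(∫_ℝ ‖vᵐ(p)‖² dp) = (1/2)(‖uᵐ‖/‖u₀‖)²`. -/
theorem stmt11 {n : ℕ} (H1 H2 Q : Matrix (Fin n) (Fin n) ℂ) (l : Fin n → ℝ)
    (hH1 : H1.IsHermitian) (hH2 : H2.IsHermitian)
    (hQ : Q ∈ Matrix.unitaryGroup (Fin n) ℂ)
    (hspec : H1 = Q * Matrix.diagonal (fun i => (l i : ℂ)) * Qᴴ)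
    (hneg : ∀ i, l i ≤ 0)
    (Δt : ℝ) (hΔt : 0 < Δt) (u0 : Fin n → ℂ) (hu0 : u0 ≠ 0)
    (T : ℝ → (ℝ → Fin n → ℂ) → (ℝ → Fin n → ℂ))
    (hT : ∀ (t : ℝ) (w : ℝ → Fin n → ℂ) (p : ℝ),
      T t w p = Q.mulVec (fun i => Qᴴ.mulVec (w (p - l i * t)) i))
    (u : ℕ → Fin n → ℂ)
    (hu0' : u 0 = u0)
    (hu : ∀ m : ℕ, u (m + 1) =
      (NormedSpace.exp ((Complex.I * (Δt : ℂ)) • H2)).mulVec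
        ((NormedSpace.exp (Δt • H1)).mulVec (u m)))
    (v : ℕ → ℝ → Fin n → ℂ)
    (hv0 : ∀ p : ℝ, v 0 p = Real.exp (-|p|) • u0)
    (hv : ∀ (m : ℕ) (p : ℝ), v (m + 1) p =
      (NormedSpace.exp ((Complex.I * (Δt : ℂ)) • H2)).mulVec (T Δt (v m) p)) :
    ∀ m : ℕ,
      (∫ p in Set.Ioi (0 : ℝ), (euclNorm (v m p)) ^ 2) / (∫ p : ℝ, (euclNorm (v m p)) ^ 2)
        = (1 / 2) * (euclNorm (u m) / euclNorm u0) ^ 2 :=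
  stmt11_general H1 H2 Q l hH2 hQ hspec hneg Δt hΔt u0 T hT u hu0' hu v hv0 hv
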